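/- arXiv:1410.4408 — 2 statements merged into one kernel-verified Lean document; each statement's English description precedes it below -/
import Mathlib

section
/- Let g : ℝ → ℝ be continuous, bounded (|g(t)| ≤ M for all t ≥ 0), and persistently exciting in the sense that there exist T > 0 and μ > 0 with ∫_t^{t+T} g(s)^2 ds ≥ μ for all t ≥ 0. Let λ > 0, k a positive even integer, and let R solve Ṙ = -λR + g(t)^k with R(0) > 0. Then there exist constants R_min, R_max > 0 such that R_min ≤ R(t) ≤ R_max for all t ≥ 0. -/
/-!
By variation of constants, `exp (lam * t) * R t` increases by `∫ exp (lam * s) * g s ^ k` over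
any interval. As `g ^ k ≥ 0`, `R` stays nonnegative, and across a window of length `T` it
keeps at least the fraction `exp (-lam * T)` of its old value plus the window integral of
`g ^ k`. Writing `k = 2m`, the pointwise bound `δ ^ (m - 1) * x ≤ δ ^ m + x ^ m` with `x = g ^ 2`
turns persistent excitation of `g` into a positive lower bound on these window integrals.
For the upper bound, `M ^ k / lam - R` is itself a filter output driven by `M ^ k - g ^ k ≥ 0`.
-/

open Real Set intervalIntegral

theorem pow_mul_le_pow_succ_add_pow_succ {α : Type*} [Semiring α] [LinearOrder α]
    [IsStrictOrderedRing α] {δ x : α} (hδ : 0 ≤ δ) (hx : 0 ≤ x) (n : ℕ) :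
    δ ^ n * x ≤ δ ^ (n + 1) + x ^ (n + 1) := by
  rcases le_total x δ with hxδ | hδx
  · calc δ ^ n * x ≤ δ ^ (n + 1) := by rw [pow_succ]; gcongr
      _ ≤ δ ^ (n + 1) + x ^ (n + 1) := le_add_of_nonneg_right (by positivity)
  · calc δ ^ n * x ≤ x ^ (n + 1) := by rw [pow_succ]; gcongr
      _ ≤ δ ^ (n + 1) + x ^ (n + 1) := le_add_of_nonneg_left (by positivity)

section PersistentExcitation

variable {h : ℝ → ℝ}

theorem pow_mul_integral_sub_le_integral_pow (hh : Continuous h) (hh0 : ∀ s, 0 ≤ h s)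
    {a b δ : ℝ} (hab : a ≤ b) (hδ : 0 ≤ δ) (n : ℕ) :
    δ ^ n * ((∫ s in a..b, h s) - δ * (b - a)) ≤ ∫ s in a..b, h s ^ (n + 1) := by
  have hmono : ∫ s in a..b, δ ^ n * h s ≤ ∫ s in a..b, (δ ^ (n + 1) + h s ^ (n + 1)) :=
    integral_mono_on hab ((by fun_prop : Continuous _).intervalIntegrable _ _)
      ((by fun_prop : Continuous _).intervalIntegrable _ _)
      fun s _ => pow_mul_le_pow_succ_add_pow_succ hδ (hh0 s) n
  rw [integral_const_mul, integral_add intervalIntegrable_const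
    ((by fun_prop : Continuous _).intervalIntegrable _ _), integral_const, smul_eq_mul] at hmono
  linear_combination hmono

theorem exists_pos_le_integral_pow (hh : Continuous h) (hh0 : ∀ s, 0 ≤ h s) {T μ : ℝ}
    (hT : 0 < T) (hμ : 0 < μ) (hPE : ∀ t ≥ 0, μ ≤ ∫ s in t..t + T, h s) (n : ℕ) :
    ∃ μ' > 0, ∀ t ≥ 0, μ' ≤ ∫ s in t..t + T, h s ^ (n + 1) := by
  -- chosen so that the loss `δ * T` is half the excitation level `μ`
  set δ := μ / (2 * T)
  refine ⟨δ ^ n * (μ / 2), by positivity, fun t ht => ?_⟩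
  calc δ ^ n * (μ / 2) ≤ δ ^ n * ((∫ s in t..t + T, h s) - δ * (t + T - t)) := by
        gcongr
        have : δ * (t + T - t) = μ / 2 := by simp only [δ, add_sub_cancel_left]; field_simp
        linarith [hPE t ht]
    _ ≤ ∫ s in t..t + T, h s ^ (n + 1) :=
        pow_mul_integral_sub_le_integral_pow hh hh0 (by linarith) (by positivity) n

end PersistentExcitation

section LinearFilter

variable {R f : ℝ → ℝ} {lam : ℝ}

theorem hasDerivAt_exp_mul_of_hasDerivAt {t : ℝ} (h : HasDerivAt R (-lam * R t + f t) t) :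
    HasDerivAt (fun s => exp (lam * s) * R s) (exp (lam * t) * f t) t :=
  ((((hasDerivAt_id' t).const_mul lam).exp).mul h).congr_deriv (by ring)

theorem exp_mul_sub_exp_mul_eq_integral (hf : Continuous f) {a b : ℝ} (hab : a ≤ b)
    (hR : ∀ t ∈ Icc a b, HasDerivAt R (-lam * R t + f t) t) :
    exp (lam * b) * R b - exp (lam * a) * R a = ∫ s in a..b, exp (lam * s) * f s := by
  refine (integral_eq_sub_of_hasDerivAt (f := fun s => exp (lam * s) * R s)
    (fun t ht => hasDerivAt_exp_mul_of_hasDerivAt (hR t (uIcc_of_le hab ▸ ht))) ?_).symm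
  exact (by fun_prop : Continuous fun s => exp (lam * s) * f s).intervalIntegrable _ _

theorem exp_neg_mul_mul_add_integral_le (hf : Continuous f) (hlam : 0 ≤ lam) {a T : ℝ}
    (hT : 0 ≤ T) (hR : ∀ t ∈ Icc a (a + T), HasDerivAt R (-lam * R t + f t) t)
    (hf0 : ∀ t ∈ Icc a (a + T), 0 ≤ f t) :
    exp (-lam * T) * (R a + ∫ s in a..a + T, f s) ≤ R (a + T) := by
  have hgain : exp (lam * a) * ∫ s in a..a + T, f s ≤ ∫ s in a..a + T, exp (lam * s) * f s := by
    rw [← integral_const_mul]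
    refine integral_mono_on (by linarith) ((by fun_prop : Continuous _).intervalIntegrable _ _)
      ((by fun_prop : Continuous _).intervalIntegrable _ _) fun s hs => ?_
    gcongr
    · exact hf0 s hs
    · exact hs.1
  have hid := exp_mul_sub_exp_mul_eq_integral hf (by linarith) hR
  rw [mul_add, exp_add, mul_assoc] at hid
  have key : R a + ∫ s in a..a + T, f s ≤ exp (lam * T) * R (a + T) :=
    le_of_mul_le_mul_left (by linarith) (exp_pos (lam * a))
  calc exp (-lam * T) * (R a + ∫ s in a..a + T, f s)
      ≤ exp (-lam * T) * (exp (lam * T) * R (a + T)) := by gcongr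
    _ = R (a + T) := by rw [← mul_assoc, ← exp_add]; simp

theorem exp_neg_mul_mul_add_integral_le_of_nonneg (hf : Continuous f) (hlam : 0 ≤ lam)
    (hR : ∀ t ≥ 0, HasDerivAt R (-lam * R t + f t) t) (hf0 : ∀ t ≥ 0, 0 ≤ f t)
    (a T : ℝ) (ha : 0 ≤ a) (hT : 0 ≤ T) :
    exp (-lam * T) * (R a + ∫ s in a..a + T, f s) ≤ R (a + T) :=
  exp_neg_mul_mul_add_integral_le hf hlam hT (fun t ht => hR t (ha.trans ht.1))
    fun t ht => hf0 t (ha.trans ht.1)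

theorem exp_neg_mul_mul_min_le_of_le_integral (hf : Continuous f) (hlam : 0 ≤ lam)
    (hR : ∀ t ≥ 0, HasDerivAt R (-lam * R t + f t) t) (hf0 : ∀ t ≥ 0, 0 ≤ f t)
    (hR0 : 0 ≤ R 0) {T μ : ℝ} (hT : 0 ≤ T) (hPE : ∀ t ≥ 0, μ ≤ ∫ s in t..t + T, f s)
    {t : ℝ} (ht : 0 ≤ t) : exp (-lam * T) * min (R 0) μ ≤ R t := by
  have hstep := exp_neg_mul_mul_add_integral_le_of_nonneg hf hlam hR hf0
  have hint : ∀ t ≥ 0, 0 ≤ ∫ s in (0 : ℝ)..t, f s := fun t ht =>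
    integral_nonneg ht fun s hs => hf0 s hs.1
  rcases le_or_gt t T with htT | hTt
  · have hint_t := hint t ht
    calc exp (-lam * T) * min (R 0) μ ≤ exp (-lam * T) * (R 0 + ∫ s in (0 : ℝ)..t, f s) := by
          gcongr
          exact (min_le_left _ _).trans (le_add_of_nonneg_right hint_t)
      _ ≤ exp (-lam * t) * (R 0 + ∫ s in (0 : ℝ)..t, f s) :=
          mul_le_mul_of_nonneg_right (exp_le_exp.2 (by nlinarith)) (by positivity)
      _ ≤ R t := by simpa using hstep 0 t le_rfl ht
  · have hRnonneg : 0 ≤ R (t - T) := by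
      have h := hstep 0 (t - T) le_rfl (by linarith)
      rw [zero_add] at h
      exact (mul_nonneg (exp_pos _).le (add_nonneg hR0 (hint _ (by linarith)))).trans h
    calc exp (-lam * T) * min (R 0) μ
        ≤ exp (-lam * T) * (R (t - T) + ∫ s in t - T..t - T + T, f s) := by
          gcongr
          exact (min_le_right _ _).trans (by linarith [hPE (t - T) (by linarith)])
      _ ≤ R t := by simpa using hstep (t - T) T (by linarith) hT

theorem le_max_div_of_le (hf : Continuous f) (hlam : 0 < lam)
    (hR : ∀ t ≥ 0, HasDerivAt R (-lam * R t + f t) t) {F : ℝ} (hfF : ∀ t ≥ 0, f t ≤ F)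
    {t : ℝ} (ht : 0 ≤ t) : R t ≤ max (R 0) (F / lam) := by
  set c := F / lam
  have hc : lam * c = F := mul_div_cancel₀ F hlam.ne'
  -- `c - R` is again a filter output, now driven by the nonnegative input `F - f`
  have hcR : ∀ t ≥ 0, HasDerivAt (fun s => c - R s) (-lam * (c - R t) + (F - f t)) t :=
    fun t ht => ((hR t ht).const_sub c).congr_deriv (by linear_combination hc)
  have h := exp_neg_mul_mul_add_integral_le_of_nonneg (by fun_prop) hlam.le hcR
    (fun t ht => sub_nonneg.2 (hfF t ht)) 0 t le_rfl ht
  rw [zero_add] at h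
  have hint : 0 ≤ ∫ s in (0 : ℝ)..t, (F - f s) :=
    integral_nonneg ht fun s hs => sub_nonneg.2 (hfF s hs.1)
  have he : exp (-lam * t) ≤ 1 := exp_le_one_iff.2 (by nlinarith)
  have he0 := exp_pos (-lam * t)
  nlinarith [le_max_left (R 0) c, le_max_right (R 0) c]

end LinearFilter

/-- Persistence filter with constant gain: boundedness above and below of `R`. -/
theorem stmt_0
    (g : ℝ → ℝ) (hg_cont : Continuous g)
    (M : ℝ) (hM : ∀ t ≥ (0:ℝ), |g t| ≤ M)
    (T μ : ℝ) (hT : 0 < T) (hμ : 0 < μ)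
    (hPE : ∀ t ≥ (0:ℝ), μ ≤ ∫ s in t..(t + T), (g s) ^ 2)
    (lam : ℝ) (hlam : 0 < lam)
    (k : ℕ) (hk : 0 < k) (hkeven : Even k)
    (R : ℝ → ℝ)
    (hR : ∀ t ≥ (0:ℝ), HasDerivAt R (-lam * R t + (g t) ^ k) t)
    (hR0 : 0 < R 0) :
    ∃ Rmin Rmax : ℝ, 0 < Rmin ∧ 0 < Rmax ∧
      ∀ t ≥ (0:ℝ), Rmin ≤ R t ∧ R t ≤ Rmax := by
  obtain ⟨n, hn⟩ : ∃ n, k = 2 * (n + 1) := by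
    obtain ⟨m, rfl⟩ := hkeven
    exact ⟨m - 1, by omega⟩
  have hgk : ∀ s, g s ^ k = (g s ^ 2) ^ (n + 1) := fun s => by rw [hn, pow_mul]
  obtain ⟨μ', hμ', hPEk⟩ := exists_pos_le_integral_pow (h := fun s => g s ^ 2) (by fun_prop)
    (fun s => sq_nonneg _) hT hμ hPE n
  simp only [← hgk] at hPEk
  have hgk_nonneg : ∀ t, 0 ≤ g t ^ k := fun t => hkeven.pow_nonneg _
  have hgk_le : ∀ t ≥ 0, g t ^ k ≤ M ^ k := fun t ht => by
    rw [← hkeven.pow_abs]; exact pow_le_pow_left₀ (abs_nonneg _) (hM t ht) k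
  refine ⟨exp (-lam * T) * min (R 0) μ', max (R 0) (M ^ k / lam), by positivity,
    lt_max_of_lt_left hR0, fun t ht => ⟨?_, ?_⟩⟩
  · exact exp_neg_mul_mul_min_le_of_le_integral (by fun_prop) hlam.le hR
      (fun t _ => hgk_nonneg t) hR0.le hT.le hPEk ht
  · exact le_max_div_of_le (by fun_prop) hlam hR hgk_le ht
end

section
/- Let λ̂ : ℝ≥0 → ℝ be continuous with 0 < λ̂_min ≤ λ̂(t) ≤ λ̂_max for all t ≥ 0, and let g : ℝ → ℝ be continuous, bounded, with g(t)^k ≥ 0 and satisfying ∫_t^{t+T} g(s)^k ds ≥ μ > 0 for all t ≥ 0 (for some fixed T > 0). Then the solution of Ṙ = -λ̂(t) R + g(t)^k with R(0) > 0 satisfies 0 < R_min ≤ R(t) ≤ R_max for all t ≥ 0, for some constants R_min, R_max. -/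
/-!
With the integrating factor `Φ t = exp (∫₀ᵗ λ̂)`, the equation reads `(R Φ)' = Φ gᵏ`, so
`R t Φ t - R s Φ s = ∫ₛᵗ Φ gᵏ`. Since `gᵏ ≥ 0`, `R Φ` is nondecreasing and stays above `R 0 > 0`;
over a window of length `T` it gains at least `Φ (t - T) μ`, while `Φ` itself grows by at most
the factor `exp (λ̂_max T)`, which gives the lower bound. For the upper bound, `R - B` with
`B = Mᵏ / λ̂_min` solves the same equation with the nonpositive forcing `gᵏ - λ̂ B`.
-/

open Real Set intervalIntegral

noncomputable def integratingFactor (lam : ℝ → ℝ) (t : ℝ) : ℝ :=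
  exp (∫ s in (0 : ℝ)..t, lam s)

section IntegratingFactor

variable {lam : ℝ → ℝ}

theorem integratingFactor_pos (t : ℝ) : 0 < integratingFactor lam t :=
  exp_pos _

@[simp]
theorem integratingFactor_zero : integratingFactor lam 0 = 1 := by
  simp [integratingFactor]

theorem hasDerivAt_integratingFactor (hlam : Continuous lam) (t : ℝ) :
    HasDerivAt (integratingFactor lam) (lam t * integratingFactor lam t) t :=
  (hlam.integral_hasStrictDerivAt 0 t).hasDerivAt.exp.congr_deriv (mul_comm _ _)

theorem continuous_integratingFactor (hlam : Continuous lam) :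
    Continuous (integratingFactor lam) :=
  continuous_iff_continuousAt.2 fun t => (hasDerivAt_integratingFactor hlam t).continuousAt

theorem integratingFactor_eq_mul_exp_integral (hlam : Continuous lam) (s t : ℝ) :
    integratingFactor lam t = integratingFactor lam s * exp (∫ u in s..t, lam u) := by
  rw [integratingFactor, integratingFactor, ← exp_add,
    integral_add_adjacent_intervals (hlam.intervalIntegrable _ _) (hlam.intervalIntegrable _ _)]

theorem integratingFactor_le_integratingFactor (hlam : Continuous lam)
    (hlam_nonneg : ∀ u ≥ 0, 0 ≤ lam u) {s t : ℝ} (hs : 0 ≤ s) (hst : s ≤ t) :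
    integratingFactor lam s ≤ integratingFactor lam t := by
  rw [integratingFactor_eq_mul_exp_integral hlam s t]
  refine le_mul_of_one_le_right (integratingFactor_pos s).le (one_le_exp ?_)
  exact integral_nonneg hst fun u hu => hlam_nonneg u (hs.trans hu.1)

theorem integratingFactor_le_mul_exp (hlam : Continuous lam) {c : ℝ} (hlam_le : ∀ u ≥ 0, lam u ≤ c)
    {s t : ℝ} (hs : 0 ≤ s) (hst : s ≤ t) :
    integratingFactor lam t ≤ integratingFactor lam s * exp (c * (t - s)) := by
  rw [integratingFactor_eq_mul_exp_integral hlam s t]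
  refine mul_le_mul_of_nonneg_left (exp_le_exp.2 ?_) (integratingFactor_pos s).le
  calc ∫ u in s..t, lam u ≤ ∫ _ in s..t, c :=
        integral_mono_on hst (hlam.intervalIntegrable _ _) intervalIntegrable_const
          fun u hu => hlam_le u (hs.trans hu.1)
    _ = c * (t - s) := by simp [mul_comm]

theorem integral_integratingFactor_mul_eq_sub {f R : ℝ → ℝ} (hlam : Continuous lam)
    (hf : Continuous f) (hR : ∀ t ≥ 0, HasDerivAt R (-lam t * R t + f t) t)
    {s t : ℝ} (hs : 0 ≤ s) (hst : s ≤ t) :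
    ∫ u in s..t, integratingFactor lam u * f u =
      R t * integratingFactor lam t - R s * integratingFactor lam s := by
  refine integral_eq_sub_of_hasDerivAt (f := R * integratingFactor lam)
    (fun u hu => ?_) (((continuous_integratingFactor hlam).mul hf).intervalIntegrable _ _)
  rw [uIcc_of_le hst] at hu
  exact ((hR u (hs.trans hu.1)).mul (hasDerivAt_integratingFactor hlam u)).congr_deriv (by ring)

end IntegratingFactor

section LinearEquation

variable {lam f R : ℝ → ℝ}

theorem le_max_div_of_hasDerivAt_linear {lamMin K : ℝ} (hlam : Continuous lam)
    (hf : Continuous f) (hlamMin : 0 < lamMin) (hlam_ge : ∀ t ≥ 0, lamMin ≤ lam t)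
    (hK : 0 ≤ K) (hf_le : ∀ t ≥ 0, f t ≤ K)
    (hR : ∀ t ≥ 0, HasDerivAt R (-lam t * R t + f t) t) {t : ℝ} (ht : 0 ≤ t) :
    R t ≤ max (R 0) (K / lamMin) := by
  set B := K / lamMin
  have hB : 0 ≤ B := by positivity
  have hRB : ∀ u ≥ 0, HasDerivAt (fun u => R u - B) (-lam u * (R u - B) + (f u - lam u * B)) u :=
    fun u hu => ((hR u hu).sub_const B).congr_deriv (by ring)
  have hforcing : ∀ u ∈ Icc 0 t, integratingFactor lam u * (f u - lam u * B) ≤ 0 := by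
    intro u hu
    have : f u ≤ lam u * B :=
      calc f u ≤ K := hf_le u hu.1
        _ = lamMin * B := (mul_div_cancel₀ K hlamMin.ne').symm
        _ ≤ lam u * B := mul_le_mul_of_nonneg_right (hlam_ge u hu.1) hB
    exact mul_nonpos_of_nonneg_of_nonpos (integratingFactor_pos u).le (by linarith)
  have hdecay : (R t - B) * integratingFactor lam t ≤ R 0 - B := by
    have hforcing_cont : Continuous fun u => f u - lam u * B := hf.sub (hlam.mul continuous_const)
    have hint : ∫ u in (0 : ℝ)..t, integratingFactor lam u * (f u - lam u * B) ≤ 0 := by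
      simpa using integral_mono_on ht
        (((continuous_integratingFactor hlam).mul hforcing_cont).intervalIntegrable _ _)
        (intervalIntegrable_const (μ := MeasureTheory.volume)) hforcing
    rw [integral_integratingFactor_mul_eq_sub hlam hforcing_cont hRB le_rfl ht] at hint
    simpa only [integratingFactor_zero, mul_one, sub_nonpos] using hint
  have hΦ : 1 ≤ integratingFactor lam t := by
    simpa using integratingFactor_le_integratingFactor hlam
      (fun u hu => hlamMin.le.trans (hlam_ge u hu)) le_rfl ht
  rcases le_or_gt (R t) B with h | h
  · exact h.trans (le_max_right _ _)
  · exact le_max_of_le_left (by nlinarith)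

theorem mul_integratingFactor_le_mul_integratingFactor (hlam : Continuous lam)
    (hf : Continuous f) (hf_nonneg : ∀ t ≥ 0, 0 ≤ f t)
    (hR : ∀ t ≥ 0, HasDerivAt R (-lam t * R t + f t) t) {s t : ℝ} (hs : 0 ≤ s) (hst : s ≤ t) :
    R s * integratingFactor lam s ≤ R t * integratingFactor lam t := by
  rw [← sub_nonneg, ← integral_integratingFactor_mul_eq_sub hlam hf hR hs hst]
  exact integral_nonneg hst fun u hu =>
    mul_nonneg (integratingFactor_pos u).le (hf_nonneg u (hs.trans hu.1))

theorem integratingFactor_mul_integral_le (hlam : Continuous lam) (hf : Continuous f)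
    (hlam_nonneg : ∀ t ≥ 0, 0 ≤ lam t) (hf_nonneg : ∀ t ≥ 0, 0 ≤ f t)
    {s t : ℝ} (hs : 0 ≤ s) (hst : s ≤ t) :
    integratingFactor lam s * ∫ u in s..t, f u ≤ ∫ u in s..t, integratingFactor lam u * f u := by
  rw [← integral_const_mul]
  refine integral_mono_on hst ((continuous_const.mul hf).intervalIntegrable _ _)
    (((continuous_integratingFactor hlam).mul hf).intervalIntegrable _ _) fun u hu => ?_
  exact mul_le_mul_of_nonneg_right
    (integratingFactor_le_integratingFactor hlam hlam_nonneg hs hu.1) (hf_nonneg u (hs.trans hu.1))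

theorem exp_mul_min_le_of_hasDerivAt_linear {lamMax T μ : ℝ} (hlam : Continuous lam)
    (hf : Continuous f) (hlam_nonneg : ∀ t ≥ 0, 0 ≤ lam t) (hlam_le : ∀ t ≥ 0, lam t ≤ lamMax)
    (hf_nonneg : ∀ t ≥ 0, 0 ≤ f t) (hT : 0 ≤ T) (hPE : ∀ t ≥ 0, μ ≤ ∫ s in t..(t + T), f s)
    (hR : ∀ t ≥ 0, HasDerivAt R (-lam t * R t + f t) t) (hR0 : 0 ≤ R 0) {t : ℝ} (ht : 0 ≤ t) :
    exp (-(lamMax * T)) * min (R 0) μ ≤ R t := by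
  have hstart {t : ℝ} (ht : 0 ≤ t) : R 0 ≤ R t * integratingFactor lam t := by
    simpa using mul_integratingFactor_le_mul_integratingFactor hlam hf hf_nonneg hR le_rfl ht
  have hRt_nonneg : 0 ≤ R t :=
    (mul_nonneg_iff_of_pos_right (integratingFactor_pos t)).1 (hR0.trans (hstart ht))
  suffices h : min (R 0) μ ≤ R t * exp (lamMax * T) by
    calc exp (-(lamMax * T)) * min (R 0) μ ≤ exp (-(lamMax * T)) * (R t * exp (lamMax * T)) := by
          gcongr
      _ = R t := by rw [exp_neg]; field_simp
  rcases le_or_gt t T with htT | hTt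
  · have hΦ : integratingFactor lam t ≤ exp (lamMax * T) := by
      have hlamMax : 0 ≤ lamMax := (hlam_nonneg 0 le_rfl).trans (hlam_le 0 le_rfl)
      calc integratingFactor lam t ≤ exp (lamMax * t) := by
            simpa using integratingFactor_le_mul_exp hlam hlam_le le_rfl ht
        _ ≤ exp (lamMax * T) := by gcongr
    calc min (R 0) μ ≤ R t * integratingFactor lam t := (min_le_left _ _).trans (hstart ht)
      _ ≤ R t * exp (lamMax * T) := by gcongr
  · set s := t - T
    have hs : 0 ≤ s := by linarith
    have hst : s ≤ t := by linarith
    have hRs : 0 ≤ R s * integratingFactor lam s := hR0.trans (hstart hs)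
    have hgain : integratingFactor lam s * μ ≤ R t * integratingFactor lam t := by
      have hwindow := hPE s hs
      rw [sub_add_cancel] at hwindow
      calc integratingFactor lam s * μ ≤ integratingFactor lam s * ∫ u in s..t, f u :=
            mul_le_mul_of_nonneg_left hwindow (integratingFactor_pos s).le
        _ ≤ ∫ u in s..t, integratingFactor lam u * f u :=
          integratingFactor_mul_integral_le hlam hf hlam_nonneg hf_nonneg hs hst
        _ ≤ R t * integratingFactor lam t := by
          rw [integral_integratingFactor_mul_eq_sub hlam hf hR hs hst]; linarith
    have hΦ := integratingFactor_le_mul_exp hlam hlam_le hs hst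
    rw [sub_sub_cancel] at hΦ
    have : integratingFactor lam s * μ ≤ integratingFactor lam s * (R t * exp (lamMax * T)) := by
      calc _ ≤ R t * integratingFactor lam t := hgain
        _ ≤ R t * (integratingFactor lam s * exp (lamMax * T)) := by gcongr
        _ = _ := by ring
    exact (min_le_right _ _).trans (le_of_mul_le_mul_left this (integratingFactor_pos s))

end LinearEquation

/-- Persistence filter with bounded time-varying gain `λ̂`. -/
theorem stmt_1
    (lamHat : ℝ → ℝ) (hlam_cont : Continuous lamHat)
    (lamMin lamMax : ℝ) (hlamMin : 0 < lamMin)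
    (hlam_bd : ∀ t ≥ (0:ℝ), lamMin ≤ lamHat t ∧ lamHat t ≤ lamMax)
    (g : ℝ → ℝ) (hg_cont : Continuous g)
    (M : ℝ) (hM : ∀ t ≥ (0:ℝ), |g t| ≤ M)
    (k : ℕ) (hgk : ∀ t ≥ (0:ℝ), 0 ≤ (g t) ^ k)
    (T μ : ℝ) (hT : 0 < T) (hμ : 0 < μ)
    (hPE : ∀ t ≥ (0:ℝ), μ ≤ ∫ s in t..(t + T), (g s) ^ k)
    (R : ℝ → ℝ)
    (hR : ∀ t ≥ (0:ℝ), HasDerivAt R (-(lamHat t) * R t + (g t) ^ k) t)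
    (hR0 : 0 < R 0) :
    ∃ Rmin Rmax : ℝ, 0 < Rmin ∧ 0 < Rmax ∧
      ∀ t ≥ (0:ℝ), Rmin ≤ R t ∧ R t ≤ Rmax := by
  have hM0 : 0 ≤ M := (abs_nonneg _).trans (hM 0 le_rfl)
  have hgk_le : ∀ t ≥ (0:ℝ), g t ^ k ≤ M ^ k := fun t ht =>
    calc g t ^ k ≤ |g t| ^ k := abs_pow (g t) k ▸ le_abs_self _
      _ ≤ M ^ k := pow_le_pow_left₀ (abs_nonneg _) (hM t ht) k
  have hlam_nonneg : ∀ t ≥ (0:ℝ), 0 ≤ lamHat t := fun t ht => hlamMin.le.trans (hlam_bd t ht).1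
  refine ⟨exp (-(lamMax * T)) * min (R 0) μ, max (R 0) (M ^ k / lamMin), by positivity,
    lt_max_of_lt_left hR0, fun t ht => ⟨?_, ?_⟩⟩
  · exact exp_mul_min_le_of_hasDerivAt_linear hlam_cont (hg_cont.pow k) hlam_nonneg
      (fun t ht => (hlam_bd t ht).2) hgk hT.le hPE hR hR0.le ht
  · exact le_max_div_of_hasDerivAt_linear hlam_cont (hg_cont.pow k) hlamMin
      (fun t ht => (hlam_bd t ht).1) (pow_nonneg hM0 k) hgk_le hR ht
end
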